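/- arXiv:2303.02607 — 4 statements merged into one kernel-verified Lean document; each statement's English description precedes it below -/
import Mathlib

section
/- Let n ≥ 1, let λ₁,…,λₙ be strictly positive real numbers and b₁,…,bₙ real numbers. Define c₀ = exp(−(1/2)·Σᵢ bᵢ²) · Πᵢ (2λᵢ)^{−1/2}, dₖ = (1/2)·Σᵢ (1 − k·bᵢ²)(2λᵢ)^{−k} for k ≥ 1, and cₖ = (1/k)·Σ_{i=0}^{k−1} d_{k−i} cᵢ for k ≥ 1. Then for every q ≥ 0 the infinite series Σ_{k=0}^{∞} (−1)ᵏ cₖ · q^{n/2+k} / Γ(n/2 + k + 1) converges, where Γ is the Gamma function. -/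
/-!
Since `x ^ (-k) = (|x|⁻¹) ^ k` up to sign for every real `x` and `|1 - k b²| ≤ (1 + b²) ^ k`,
the `dₖ` grow at most geometrically, `|dₖ| ≤ C Rᵏ`. Feeding this into the recursion and summing
the geometric series `C ∑_{i<k} (1 + C)ⁱ = (1 + C)ᵏ - 1` gives `|cₖ| ≤ |c₀| (R (1 + C))ᵏ`.
Finally `Γ(s + k + 1) ≥ k! Γ(s + 1)`, so the series is dominated by an exponential series.
-/

open Filter Finset Nat

lemma abs_rpow_neg_natCast (x : ℝ) (k : ℕ) : |x ^ (-(k : ℝ))| = |x|⁻¹ ^ k := by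
  rw [show (-(k : ℝ)) = ((-k : ℤ) : ℝ) by push_cast; ring, Real.rpow_intCast, zpow_neg,
    zpow_natCast, abs_inv, abs_pow, inv_pow]

lemma abs_one_sub_mul_sq_mul_rpow_neg_le (k : ℕ) (b x : ℝ) :
    |(1 - k * b ^ 2) * x ^ (-(k : ℝ))| ≤ ((1 + b ^ 2) * |x|⁻¹) ^ k := by
  have hkb : 0 ≤ (k : ℝ) * b ^ 2 := by positivity
  have h1 : |1 - k * b ^ 2| ≤ (1 + b ^ 2) ^ k :=
    calc |1 - k * b ^ 2| ≤ 1 + k * b ^ 2 := abs_le.mpr ⟨by linarith, by linarith⟩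
      _ ≤ (1 + b ^ 2) ^ k := one_add_mul_le_pow (by nlinarith [sq_nonneg b]) k
  rw [abs_mul, abs_rpow_neg_natCast, mul_pow]
  exact mul_le_mul_of_nonneg_right h1 (by positivity)

lemma abs_half_sum_one_sub_mul_sq_mul_rpow_neg_le {ι : Type*} [Fintype ι] (k : ℕ)
    (b x : ι → ℝ) :
    |(1 / 2 : ℝ) * ∑ i, (1 - k * b i ^ 2) * x i ^ (-(k : ℝ))| ≤
      (Fintype.card ι / 2 : ℝ) * (∑ i, (1 + b i ^ 2) * |x i|⁻¹) ^ k := by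
  have hterm (i : ι) : |(1 - k * b i ^ 2) * x i ^ (-(k : ℝ))| ≤
      (∑ j, (1 + b j ^ 2) * |x j|⁻¹) ^ k :=
    (abs_one_sub_mul_sq_mul_rpow_neg_le k (b i) (x i)).trans <|
      pow_le_pow_left₀ (by positivity)
        (single_le_sum (f := fun j => (1 + b j ^ 2) * |x j|⁻¹) (fun j _ => by positivity)
          (mem_univ i)) k
  calc |(1 / 2) * ∑ i, (1 - k * b i ^ 2) * x i ^ (-(k : ℝ))|
      ≤ (1 / 2) * ∑ i, |(1 - k * b i ^ 2) * x i ^ (-(k : ℝ))| := by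
        rw [abs_mul, abs_of_pos one_half_pos]
        exact mul_le_mul_of_nonneg_left (abs_sum_le_sum_abs _ _) one_half_pos.le
    _ ≤ (1 / 2) * ∑ _i : ι, (∑ j, (1 + b j ^ 2) * |x j|⁻¹) ^ k := by
        gcongr with i; exact hterm i
    _ = (Fintype.card ι / 2) * (∑ i, (1 + b i ^ 2) * |x i|⁻¹) ^ k := by
        rw [sum_const, Finset.card_univ, nsmul_eq_mul]; ring

lemma abs_le_abs_zero_mul_pow_of_recursion {c d : ℕ → ℝ} {C R : ℝ} (hC : 0 ≤ C) (hR : 0 ≤ R)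
    (hd : ∀ k, 1 ≤ k → |d k| ≤ C * R ^ k)
    (hc : ∀ k, 1 ≤ k → c k = (1 / (k : ℝ)) * ∑ i ∈ range k, d (k - i) * c i) (k : ℕ) :
    |c k| ≤ |c 0| * (R * (1 + C)) ^ k := by
  induction k using Nat.strong_induction_on with
  | _ k ih =>
  rcases Nat.eq_zero_or_pos k with rfl | hk
  · simp
  have hinv : |1 / (k : ℝ)| ≤ 1 := by
    rw [abs_of_nonneg (by positivity)]
    exact div_le_one_of_le₀ (by exact_mod_cast hk) (by positivity)
  have hgeom : C * ∑ i ∈ range k, (1 + C) ^ i ≤ (1 + C) ^ k := by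
    have := geom_sum_mul (1 + C) k
    rw [add_sub_cancel_left] at this
    linarith
  calc |c k| ≤ 1 * ∑ i ∈ range k, |d (k - i) * c i| := by
        rw [hc k hk, abs_mul]
        exact mul_le_mul hinv (abs_sum_le_sum_abs _ _) (abs_nonneg _) zero_le_one
    _ ≤ ∑ i ∈ range k, C * R ^ (k - i) * (|c 0| * (R * (1 + C)) ^ i) := by
        rw [one_mul]
        refine sum_le_sum fun i hi => ?_
        have hik := mem_range.mp hi
        rw [abs_mul]
        exact mul_le_mul (hd _ (by omega)) (ih i hik) (abs_nonneg _) (by positivity)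
    _ = |c 0| * R ^ k * (C * ∑ i ∈ range k, (1 + C) ^ i) := by
        simp only [mul_sum]
        refine sum_congr rfl fun i hi => ?_
        have hik := (mem_range.mp hi).le
        rw [mul_pow, ← Nat.sub_add_cancel hik, pow_add, Nat.sub_add_cancel hik]
        ring
    _ ≤ |c 0| * R ^ k * (1 + C) ^ k := by gcongr
    _ = |c 0| * (R * (1 + C)) ^ k := by rw [mul_pow, mul_assoc]

lemma factorial_mul_Gamma_add_one_le {s : ℝ} (hs : 0 ≤ s) (k : ℕ) :
    k ! * Real.Gamma (s + 1) ≤ Real.Gamma (s + k + 1) := by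
  induction k with
  | zero => simp
  | succ k ih =>
    calc ((k + 1) ! : ℝ) * Real.Gamma (s + 1) = (k + 1) * (k ! * Real.Gamma (s + 1)) := by
          push_cast [Nat.factorial_succ]; ring
      _ ≤ (s + k + 1) * Real.Gamma (s + k + 1) := by gcongr; linarith
      _ = Real.Gamma (s + ↑(k + 1) + 1) := by
          rw [Nat.cast_succ, ← add_assoc, Real.Gamma_add_one (by positivity : s + k + 1 ≠ 0)]

lemma summable_mul_rpow_div_Gamma {a : ℕ → ℝ} {K S : ℝ} (ha : ∀ k, |a k| ≤ K * S ^ k)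
    {s q : ℝ} (hs : 0 ≤ s) (hq : 0 ≤ q) :
    Summable fun k => a k * q ^ (s + k) / Real.Gamma (s + k + 1) := by
  refine .of_norm_bounded
    ((Real.summable_pow_div_factorial (S * q)).mul_left (K * q ^ s / Real.Gamma (s + 1)))
    fun k => ?_
  rw [Real.norm_eq_abs, abs_div, abs_mul, Real.rpow_add_of_nonneg hq hs k.cast_nonneg,
    Real.rpow_natCast, abs_of_nonneg (by positivity : 0 ≤ q ^ s * q ^ k),
    abs_of_pos (Real.Gamma_pos_of_pos (by positivity)), mul_pow]
  calc |a k| * (q ^ s * q ^ k) / Real.Gamma (s + k + 1)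
      ≤ K * S ^ k * (q ^ s * q ^ k) / (k ! * Real.Gamma (s + 1)) := by
        have hS : 0 ≤ K * S ^ k := (abs_nonneg _).trans (ha k)
        gcongr
        · exact ha k
        · exact factorial_mul_Gamma_add_one_le hs k
    _ = K * q ^ s / Real.Gamma (s + 1) * (S ^ k * q ^ k / k !) := by
        field_simp

theorem series_converges_general {n : ℕ}
    (lam : Fin n → ℝ) (b : Fin n → ℝ)
    (c d : ℕ → ℝ)
    (hd : ∀ k : ℕ, 1 ≤ k →
      d k = (1 / 2) * ∑ i, (1 - (k : ℝ) * (b i) ^ 2) * (2 * lam i) ^ (-(k : ℝ)))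
    (hck : ∀ k : ℕ, 1 ≤ k →
      c k = (1 / (k : ℝ)) * ∑ i ∈ Finset.range k, d (k - i) * c i)
    (q : ℝ) (hq : 0 ≤ q) :
    ∃ L : ℝ, Tendsto
      (fun N => ∑ k ∈ Finset.range N,
        (-1 : ℝ) ^ k * c k * q ^ ((n : ℝ) / 2 + k) / Real.Gamma ((n : ℝ) / 2 + k + 1))
      atTop (nhds L) := by
  set R := ∑ i, (1 + b i ^ 2) * |2 * lam i|⁻¹
  have hd_le (k : ℕ) (hk : 1 ≤ k) : |d k| ≤ (n / 2 : ℝ) * R ^ k := by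
    rw [hd k hk]
    simpa only [Fintype.card_fin] using
      abs_half_sum_one_sub_mul_sq_mul_rpow_neg_le k b (fun i => 2 * lam i)
  have hc_le (k : ℕ) : |(-1) ^ k * c k| ≤ |c 0| * (R * (1 + n / 2)) ^ k := by
    rw [abs_mul, abs_neg_one_pow, one_mul]
    exact abs_le_abs_zero_mul_pow_of_recursion (by positivity) (by positivity) hd_le hck k
  exact ⟨_, (summable_mul_rpow_div_Gamma hc_le (by positivity) hq).hasSum.tendsto_sum_nat⟩

/-- Convergence of the series `∑ₖ (-1)ᵏ cₖ q^{n/2+k} / Γ(n/2+k+1)` for the coefficients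
defined by the recursion from positive `λᵢ` and real `bᵢ`. -/
theorem series_converges {n : ℕ} (hn : 1 ≤ n)
    (lam : Fin n → ℝ) (hlam : ∀ i, 0 < lam i) (b : Fin n → ℝ)
    (c d : ℕ → ℝ)
    (hc0 : c 0 = Real.exp (-(1 / 2) * ∑ i, (b i) ^ 2) * ∏ i, (2 * lam i) ^ (-(1 : ℝ) / 2))
    (hd : ∀ k : ℕ, 1 ≤ k →
      d k = (1 / 2) * ∑ i, (1 - (k : ℝ) * (b i) ^ 2) * (2 * lam i) ^ (-(k : ℝ)))
    (hck : ∀ k : ℕ, 1 ≤ k →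
      c k = (1 / (k : ℝ)) * ∑ i ∈ Finset.range k, d (k - i) * c i)
    (q : ℝ) (hq : 0 ≤ q) :
    ∃ L : ℝ, Tendsto
      (fun N => ∑ k ∈ Finset.range N,
        (-1 : ℝ) ^ k * c k * q ^ ((n : ℝ) / 2 + k) / Real.Gamma ((n : ℝ) / 2 + k + 1))
      atTop (nhds L) :=
  series_converges_general lam b c d hd hck q hq
end

section
/- Let n ≥ 1, let Q_x and Q_o be symmetric positive definite n×n real matrices, and let α > 0. Define Q_c = (1 + α)·Q_x + (1 + 1/α)·Q_o. Then Q_c is symmetric positive definite, and for all x, y ∈ ℝⁿ with xᵀ Q_x^{−1} x ≤ 1 and yᵀ Q_o^{−1} y ≤ 1, one has (x + y)ᵀ Q_c^{−1} (x + y) ≤ 1. In other words, the Minkowski sum of the ellipsoids {x : xᵀ Q_x^{−1} x ≤ 1} and {y : yᵀ Q_o^{−1} y ≤ 1} is contained in the ellipsoid {z : zᵀ Q_c^{−1} z ≤ 1}. -/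
/-!
The map `(A, z) ↦ zᵀ A⁻¹ z` is subadditive on positive definite matrices:
`(x + y)ᵀ (A + B)⁻¹ (x + y) ≤ xᵀ A⁻¹ x + yᵀ B⁻¹ y`. Applied to `A = (1 + α) Q_x` and
`B = (1 + 1/α) Q_o`, the right-hand side is at most `1/(1 + α) + 1/(1 + 1/α) = 1`.
-/

open Matrix

namespace Matrix

variable {ι : Type*} [Fintype ι]

lemma IsSymm.dotProduct_mulVec_comm {R : Type*} [CommSemiring R] {A : Matrix ι ι R}
    (hA : A.IsSymm) (u w : ι → R) : u ⬝ᵥ (A *ᵥ w) = (A *ᵥ u) ⬝ᵥ w := by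
  rw [dotProduct_mulVec, ← mulVec_transpose, hA.eq, dotProduct_comm]

variable [DecidableEq ι]

lemma dotProduct_inv_smul_mulVec {K : Type*} [Field K] {A : Matrix ι ι K} (hA : IsUnit A.det)
    {c : K} (hc : c ≠ 0) (x : ι → K) :
    x ⬝ᵥ ((c • A)⁻¹ *ᵥ x) = c⁻¹ * (x ⬝ᵥ (A⁻¹ *ᵥ x)) := by
  let := invertibleOfNonzero hc
  rw [inv_smul A c hA, invOf_eq_inv, smul_mulVec, dotProduct_smul, smul_eq_mul]

namespace PosDef

variable {A : Matrix ι ι ℝ}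

lemma mulVec_inv_mulVec (hA : A.PosDef) (u : ι → ℝ) : A *ᵥ (A⁻¹ *ᵥ u) = u := by
  rw [mulVec_mulVec, mul_nonsing_inv _ hA.det_pos.ne'.isUnit, one_mulVec]

/-- Expanding `0 ≤ vᵀ A v` at `v = A⁻¹ u - w`. -/
lemma two_mul_dotProduct_le (hA : A.PosDef) (u w : ι → ℝ) :
    2 * (u ⬝ᵥ w) ≤ u ⬝ᵥ (A⁻¹ *ᵥ u) + w ⬝ᵥ (A *ᵥ w) := by
  have hnonneg := hA.posSemidef.dotProduct_mulVec_nonneg (A⁻¹ *ᵥ u - w)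
  have hcross : (A⁻¹ *ᵥ u) ⬝ᵥ (A *ᵥ w) = u ⬝ᵥ w := by
    rw [(isHermitian_iff_isSymm.mp hA.1).dotProduct_mulVec_comm, hA.mulVec_inv_mulVec]
  simp only [star_trivial, mulVec_sub, hA.mulVec_inv_mulVec, sub_dotProduct, dotProduct_sub,
    hcross] at hnonneg
  linarith [dotProduct_comm (A⁻¹ *ᵥ u) u, dotProduct_comm w u]

/-- Apply `two_mul_dotProduct_le` to both summands at `w = (A + B)⁻¹ (x + y)`, for which
`(x + y)ᵀ w = wᵀ A w + wᵀ B w`. -/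
lemma dotProduct_inv_add_mulVec_le {B : Matrix ι ι ℝ} (hA : A.PosDef) (hB : B.PosDef)
    (x y : ι → ℝ) :
    (x + y) ⬝ᵥ ((A + B)⁻¹ *ᵥ (x + y)) ≤ x ⬝ᵥ (A⁻¹ *ᵥ x) + y ⬝ᵥ (B⁻¹ *ᵥ y) := by
  set w := (A + B)⁻¹ *ᵥ (x + y)
  have hw : (A + B) *ᵥ w = x + y := (hA.add hB).mulVec_inv_mulVec _
  have hsplit : (x + y) ⬝ᵥ w = w ⬝ᵥ (A *ᵥ w) + w ⬝ᵥ (B *ᵥ w) := by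
    rw [← dotProduct_add, ← add_mulVec, hw, dotProduct_comm]
  have hx := hA.two_mul_dotProduct_le x w
  have hy := hB.two_mul_dotProduct_le y w
  rw [add_dotProduct] at hsplit ⊢
  linarith

end PosDef

end Matrix

theorem minkowski_sum_outer_ellipsoid_general {n : ℕ}
    (Qx Qo : Matrix (Fin n) (Fin n) ℝ) (hQx : Qx.PosDef) (hQo : Qo.PosDef)
    (α : ℝ) (hα : 0 < α)
    (Qc : Matrix (Fin n) (Fin n) ℝ) (hQc : Qc = (1 + α) • Qx + (1 + 1 / α) • Qo) :
    Qc.PosDef ∧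
      ∀ x y : Fin n → ℝ, x ⬝ᵥ (Qx⁻¹ *ᵥ x) ≤ 1 → y ⬝ᵥ (Qo⁻¹ *ᵥ y) ≤ 1 →
        (x + y) ⬝ᵥ (Qc⁻¹ *ᵥ (x + y)) ≤ 1 := by
  have hx' : (0 : ℝ) < 1 + α := by positivity
  have ho' : (0 : ℝ) < 1 + 1 / α := by positivity
  have hQx' := hQx.smul hx'
  have hQo' := hQo.smul ho'
  subst hQc
  refine ⟨hQx'.add hQo', fun x y hx hy => ?_⟩
  calc (x + y) ⬝ᵥ (((1 + α) • Qx + (1 + 1 / α) • Qo)⁻¹ *ᵥ (x + y))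
      ≤ x ⬝ᵥ (((1 + α) • Qx)⁻¹ *ᵥ x) + y ⬝ᵥ (((1 + 1 / α) • Qo)⁻¹ *ᵥ y) :=
        hQx'.dotProduct_inv_add_mulVec_le hQo' x y
    _ = (1 + α)⁻¹ * (x ⬝ᵥ (Qx⁻¹ *ᵥ x)) + (1 + 1 / α)⁻¹ * (y ⬝ᵥ (Qo⁻¹ *ᵥ y)) := by
        rw [dotProduct_inv_smul_mulVec hQx.det_pos.ne'.isUnit hx'.ne',
          dotProduct_inv_smul_mulVec hQo.det_pos.ne'.isUnit ho'.ne']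
    _ ≤ (1 + α)⁻¹ + (1 + 1 / α)⁻¹ :=
        add_le_add (mul_le_of_le_one_right (by positivity) hx)
          (mul_le_of_le_one_right (by positivity) hy)
    _ = 1 := by field_simp; ring

/-- The outer ellipsoid `Q_c = (1+α) Q_x + (1+1/α) Q_o` is positive definite and contains the
Minkowski sum of the ellipsoids of `Q_x` and `Q_o`. -/
theorem minkowski_sum_outer_ellipsoid {n : ℕ} (hn : 1 ≤ n)
    (Qx Qo : Matrix (Fin n) (Fin n) ℝ) (hQx : Qx.PosDef) (hQo : Qo.PosDef)
    (α : ℝ) (hα : 0 < α)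
    (Qc : Matrix (Fin n) (Fin n) ℝ) (hQc : Qc = (1 + α) • Qx + (1 + 1 / α) • Qo) :
    Qc.PosDef ∧
      ∀ x y : Fin n → ℝ, x ⬝ᵥ (Qx⁻¹ *ᵥ x) ≤ 1 → y ⬝ᵥ (Qo⁻¹ *ᵥ y) ≤ 1 →
        (x + y) ⬝ᵥ (Qc⁻¹ *ᵥ (x + y)) ≤ 1 :=
  minkowski_sum_outer_ellipsoid_general Qx Qo hQx hQo α hα Qc hQc
end

section
/- Let n ≥ 1, let Q_x and Q_o be symmetric positive definite n×n real matrices, set α = tr(Q_o)/tr(Q_x) and Q_c = (1 + α)·Q_x + (1 + 1/α)·Q_o. Let μ be the multivariate Gaussian measure N(m, Σ) on ℝⁿ for some m ∈ ℝⁿ and symmetric positive definite Σ. Then the probability under μ that a point lies in the Minkowski sum of the ellipsoids {x : xᵀ Q_x^{−1} x ≤ 1} and {y : yᵀ Q_o^{−1} y ≤ 1} is at most the probability under μ of the set {z : zᵀ Q_c^{−1} z ≤ 1}. -/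
/-!
The Minkowski sum is in fact contained in the outer ellipsoid, so the inequality holds for every
measure. For positive definite `A` and `B` the quadratic forms of the inverses satisfy
`(x + y)ᵀ (A + B)⁻¹ (x + y) ≤ xᵀ A⁻¹ x + yᵀ B⁻¹ y`, because `xᵀ A⁻¹ x` is the supremum over `w` of
`2 wᵀ x - wᵀ A w`. Taking `A = (1 + α) Q_x` and `B = (1 + 1/α) Q_o`, whose scale factors have
reciprocals summing to `1`, turns the two constraints `≤ 1` into the constraint for `Q_c`.
-/

open MeasureTheory Matrix Real Pointwise

/-- Density of the multivariate Gaussian `N(m, S)` on `ℝⁿ`. -/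
noncomputable def gaussianPdf {n : ℕ} (m : Fin n → ℝ) (S : Matrix (Fin n) (Fin n) ℝ)
    (x : Fin n → ℝ) : ℝ :=
  (2 * π) ^ (-(n : ℝ) / 2) * S.det ^ (-(1 : ℝ) / 2) *
    Real.exp (-(1 / 2) * ((x - m) ⬝ᵥ (S⁻¹ *ᵥ (x - m))))

/-- The multivariate Gaussian measure `N(m, S)` on `ℝⁿ`. -/
noncomputable def gaussianMeasure {n : ℕ} (m : Fin n → ℝ) (S : Matrix (Fin n) (Fin n) ℝ) :
    Measure (Fin n → ℝ) :=
  volume.withDensity fun x => ENNReal.ofReal (gaussianPdf m S x)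

namespace Matrix.PosDef

variable {ι : Type*} [Fintype ι] [DecidableEq ι] {A B : Matrix ι ι ℝ}

theorem two_mul_dotProduct_sub_le_dotProduct_inv_mulVec (hA : A.PosDef) (x w : ι → ℝ) :
    2 * (w ⬝ᵥ x) - w ⬝ᵥ (A *ᵥ w) ≤ x ⬝ᵥ (A⁻¹ *ᵥ x) := by
  have hsq := hA.inv.posSemidef.dotProduct_mulVec_nonneg (x - A *ᵥ w)
  have hAinvA : A⁻¹ *ᵥ (A *ᵥ w) = w := by
    rw [mulVec_mulVec, nonsing_inv_mul _ hA.det_pos.ne'.isUnit, one_mulVec]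
  have hcross : (A *ᵥ w) ⬝ᵥ (A⁻¹ *ᵥ x) = w ⬝ᵥ x := by
    rw [dotProduct_comm, dotProduct_mulVec, ← mulVec_transpose,
      ← conjTranspose_eq_transpose_of_trivial, hA.isHermitian.eq, mulVec_mulVec,
      mul_nonsing_inv _ hA.det_pos.ne'.isUnit, one_mulVec, dotProduct_comm]
  simp only [star_trivial, mulVec_sub, sub_dotProduct, dotProduct_sub, hAinvA, hcross] at hsq
  rw [dotProduct_comm x w, dotProduct_comm (A *ᵥ w) w] at hsq
  linarith

theorem two_mul_dotProduct_sub_eq_dotProduct_inv_mulVec (hA : A.PosDef) (x : ι → ℝ) :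
    2 * ((A⁻¹ *ᵥ x) ⬝ᵥ x) - (A⁻¹ *ᵥ x) ⬝ᵥ (A *ᵥ (A⁻¹ *ᵥ x)) = x ⬝ᵥ (A⁻¹ *ᵥ x) := by
  rw [mulVec_mulVec, mul_nonsing_inv _ hA.det_pos.ne'.isUnit, one_mulVec, dotProduct_comm]
  ring

theorem dotProduct_add_inv_mulVec_le (hA : A.PosDef) (hB : B.PosDef) (x y : ι → ℝ) :
    (x + y) ⬝ᵥ ((A + B)⁻¹ *ᵥ (x + y)) ≤ x ⬝ᵥ (A⁻¹ *ᵥ x) + y ⬝ᵥ (B⁻¹ *ᵥ y) := by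
  set w := (A + B)⁻¹ *ᵥ (x + y)
  calc (x + y) ⬝ᵥ ((A + B)⁻¹ *ᵥ (x + y)) = 2 * (w ⬝ᵥ (x + y)) - w ⬝ᵥ ((A + B) *ᵥ w) :=
        ((hA.add hB).two_mul_dotProduct_sub_eq_dotProduct_inv_mulVec _).symm
    _ = (2 * (w ⬝ᵥ x) - w ⬝ᵥ (A *ᵥ w)) + (2 * (w ⬝ᵥ y) - w ⬝ᵥ (B *ᵥ w)) := by
        rw [add_mulVec, dotProduct_add, dotProduct_add]
        ring
    _ ≤ x ⬝ᵥ (A⁻¹ *ᵥ x) + y ⬝ᵥ (B⁻¹ *ᵥ y) :=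
        add_le_add (hA.two_mul_dotProduct_sub_le_dotProduct_inv_mulVec x w)
          (hB.two_mul_dotProduct_sub_le_dotProduct_inv_mulVec y w)

end Matrix.PosDef

section Ellipsoid

variable {ι : Type*} [Fintype ι] [DecidableEq ι]

def ellipsoid (Q : Matrix ι ι ℝ) : Set (ι → ℝ) :=
  {x | x ⬝ᵥ (Q⁻¹ *ᵥ x) ≤ 1}

theorem dotProduct_smul_inv_mulVec {Q : Matrix ι ι ℝ} (hQ : IsUnit Q.det) {c : ℝ} (hc : c ≠ 0)
    (x : ι → ℝ) : x ⬝ᵥ ((c • Q)⁻¹ *ᵥ x) = c⁻¹ * (x ⬝ᵥ (Q⁻¹ *ᵥ x)) := by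
  have hinv : (c • Q)⁻¹ = c⁻¹ • Q⁻¹ := inv_eq_left_inv <| by
    rw [smul_mul_smul_comm, inv_mul_cancel₀ hc, nonsing_inv_mul _ hQ, one_smul]
  rw [hinv, smul_mulVec, dotProduct_smul, smul_eq_mul]

theorem ellipsoid_add_subset_ellipsoid_smul_add {P Q : Matrix ι ι ℝ} (hP : P.PosDef)
    (hQ : Q.PosDef) {a b : ℝ} (ha : 0 < a) (hb : 0 < b) (hab : a⁻¹ + b⁻¹ = 1) :
    ellipsoid P + ellipsoid Q ⊆ ellipsoid (a • P + b • Q) := by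
  rintro _ ⟨x, hx, y, hy, rfl⟩
  calc (x + y) ⬝ᵥ ((a • P + b • Q)⁻¹ *ᵥ (x + y))
      ≤ x ⬝ᵥ ((a • P)⁻¹ *ᵥ x) + y ⬝ᵥ ((b • Q)⁻¹ *ᵥ y) :=
        (hP.smul ha).dotProduct_add_inv_mulVec_le (hQ.smul hb) x y
    _ = a⁻¹ * (x ⬝ᵥ (P⁻¹ *ᵥ x)) + b⁻¹ * (y ⬝ᵥ (Q⁻¹ *ᵥ y)) := by
        rw [dotProduct_smul_inv_mulVec hP.det_pos.ne'.isUnit ha.ne',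
          dotProduct_smul_inv_mulVec hQ.det_pos.ne'.isUnit hb.ne']
    _ ≤ a⁻¹ * 1 + b⁻¹ * 1 := by
        gcongr
        exacts [hx, hy]
    _ = 1 := by rw [mul_one, mul_one, hab]

end Ellipsoid

theorem gaussian_prob_minkowski_le_outer_general {n : ℕ} (hn : 1 ≤ n)
    (Qx Qo : Matrix (Fin n) (Fin n) ℝ) (hQx : Qx.PosDef) (hQo : Qo.PosDef)
    (α : ℝ) (hα : α = Qo.trace / Qx.trace)
    (Qc : Matrix (Fin n) (Fin n) ℝ) (hQc : Qc = (1 + α) • Qx + (1 + 1 / α) • Qo)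
    (m : Fin n → ℝ) (Sg : Matrix (Fin n) (Fin n) ℝ) :
    gaussianMeasure m Sg
        ({x | x ⬝ᵥ (Qx⁻¹ *ᵥ x) ≤ 1} + {y | y ⬝ᵥ (Qo⁻¹ *ᵥ y) ≤ 1}) ≤
      gaussianMeasure m Sg {z | z ⬝ᵥ (Qc⁻¹ *ᵥ z) ≤ 1} := by
  have : Nonempty (Fin n) := ⟨⟨0, hn⟩⟩
  have hα_pos : 0 < α := hα ▸ div_pos hQo.trace_pos hQx.trace_pos
  have hweights : (1 + α)⁻¹ + (1 + 1 / α)⁻¹ = 1 := by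
    field_simp
    ring
  subst hQc
  exact measure_mono
    (ellipsoid_add_subset_ellipsoid_smul_add hQx hQo (by positivity) (by positivity) hweights)

/-- The Gaussian probability of the Minkowski sum of the two ellipsoids is at most the
Gaussian probability of the outer ellipsoid `Q_c = (1+α) Q_x + (1+1/α) Q_o` with
`α = tr(Q_o)/tr(Q_x)`. -/
theorem gaussian_prob_minkowski_le_outer {n : ℕ} (hn : 1 ≤ n)
    (Qx Qo : Matrix (Fin n) (Fin n) ℝ) (hQx : Qx.PosDef) (hQo : Qo.PosDef)
    (α : ℝ) (hα : α = Qo.trace / Qx.trace)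
    (Qc : Matrix (Fin n) (Fin n) ℝ) (hQc : Qc = (1 + α) • Qx + (1 + 1 / α) • Qo)
    (m : Fin n → ℝ) (Sg : Matrix (Fin n) (Fin n) ℝ) (hSg : Sg.PosDef) :
    gaussianMeasure m Sg
        ({x | x ⬝ᵥ (Qx⁻¹ *ᵥ x) ≤ 1} + {y | y ⬝ᵥ (Qo⁻¹ *ᵥ y) ≤ 1}) ≤
      gaussianMeasure m Sg {z | z ⬝ᵥ (Qc⁻¹ *ᵥ z) ≤ 1} :=
  gaussian_prob_minkowski_le_outer_general hn Qx Qo hQx hQo α hα Qc hQc m Sg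
end

section
/- Let n ≥ 1 and let Hₙ denote the degree-n physicists' Hermite polynomial, defined by Hₙ(z) = (−1)ⁿ e^{z²} (dⁿ/dzⁿ) e^{−z²}. Let z₁,…,zₙ be the n (real, distinct) roots of Hₙ, and define weights wⱼ = 2^{n−1} n! √π / (n² · H_{n−1}(zⱼ)²) for j = 1,…,n. Then for every real polynomial h of degree at most 2n − 1, ∫_{−∞}^{∞} e^{−z²} h(z) dz = Σ_{j=1}^{n} wⱼ h(zⱼ). -/
/-!
Integrating by parts against `exp (-t²)` gives `∫ Hₙ p e^{-t²} = ∫ p⁽ⁿ⁾ e^{-t²}`, so `Hₙ` is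
orthogonal to every polynomial of degree `< n`. Since `Hₙ = 2ⁿ ∏ⱼ (X - zⱼ)`, dividing `h` by the
node polynomial leaves a remainder with the same integral and the same values at the nodes, so the
rule is exact with the weights `∫ ℓⱼ e^{-t²}` of the Lagrange basis `ℓⱼ`. Applying the rule to
`H_{n-1} ℓⱼ` and comparing with `∫ H_{n-1} ℓⱼ e^{-t²} = (n-1)! lc(ℓⱼ) √π`, where
`lc(ℓⱼ) = 1 / ∏_{i ≠ j} (zⱼ - zᵢ) = 2ⁿ / Hₙ'(zⱼ) = 2^{n-1} / (n H_{n-1}(zⱼ))`, identifies the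
weights.
-/

open Polynomial Real

/-- The physicists' Hermite polynomials, defined by the standard recurrence
`H₀ = 1`, `H₁ = 2X`, `H_{n+2} = 2X·H_{n+1} − 2(n+1)·H_n`
(equivalently `Hₙ(z) = (−1)ⁿ e^{z²} (dⁿ/dzⁿ) e^{−z²}`). -/
noncomputable def physHermite : ℕ → Polynomial ℝ
  | 0 => 1
  | 1 => C 2 * X
  | (n + 2) => C 2 * X * physHermite (n + 1) - C (2 * ((n : ℝ) + 1)) * physHermite n

open MeasureTheory Finset

theorem iterate_derivative_eq_C_of_natDegree_le {R : Type*} [CommSemiring R] {p : R[X]} {k : ℕ}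
    (hp : p.natDegree ≤ k) : derivative^[k] p = C (k.factorial * p.coeff k) := by
  rw [eq_C_of_natDegree_le_zero ((natDegree_iterate_derivative p k).trans (by omega)),
    coeff_iterate_derivative, zero_add, Nat.descFactorial_self, nsmul_eq_mul]

namespace Lagrange

variable {F ι : Type*} [Field F] [DecidableEq ι] {s : Finset ι} {v : ι → F}

/-- Gaussian quadrature for an abstract linear functional. -/
theorem apply_eq_sum_apply_basis_mul_eval (hvs : Set.InjOn v s) (L : F[X] →ₗ[F] F)
    (horth : ∀ q : F[X], q.natDegree < #s → L (nodal s v * q) = 0)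
    {f : F[X]} (hf : f.natDegree < 2 * #s) :
    L f = ∑ i ∈ s, L (Lagrange.basis s v i) * f.eval (v i) := by
  set r := f %ₘ nodal s v
  have hr : r.degree < #s := degree_nodal (s := s) (v := v) ▸ degree_modByMonic_lt f nodal_monic
  have hq : (f /ₘ nodal s v).natDegree < #s := by
    rw [natDegree_divByMonic _ nodal_monic, natDegree_nodal]; omega
  have hnode : ∀ i ∈ s, r.eval (v i) = f.eval (v i) := fun i hi ↦ by
    conv_rhs => rw [← modByMonic_add_div f (nodal s v)]
    rw [eval_add, eval_mul, eval_nodal_at_node hi, zero_mul, add_zero]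
  calc L f = L r := by
        conv_lhs => rw [← modByMonic_add_div f (nodal s v)]
        rw [map_add, horth _ hq, add_zero]
    _ = ∑ i ∈ s, L (Lagrange.basis s v i) * f.eval (v i) := by
        rw [eq_interpolate_of_eval_eq _ hvs hr hnode, interpolate_apply, map_sum]
        refine sum_congr rfl fun i _ ↦ ?_
        rw [← smul_eq_C_mul, map_smul, smul_eq_mul, mul_comm]

end Lagrange

theorem physHermite_add_two (n : ℕ) :
    physHermite (n + 2) = C 2 * X * physHermite (n + 1) - C (2 * ((n : ℝ) + 1)) * physHermite n :=
  rfl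

theorem derivative_physHermite_succ :
    ∀ n : ℕ, derivative (physHermite (n + 1)) = C (2 * ((n : ℝ) + 1)) * physHermite n
  | 0 => by simp [physHermite]
  | 1 => by
    simp only [physHermite, Nat.cast_zero, Nat.cast_one, zero_add, mul_one, derivative_sub,
      derivative_mul, derivative_C, zero_mul, derivative_X, sub_zero, map_mul, map_add, map_one]
    ring
  | n + 2 => by
    rw [physHermite_add_two (n + 1)]
    simp only [derivative_sub, derivative_mul, derivative_C, derivative_X]
    rw [derivative_physHermite_succ (n + 1), derivative_physHermite_succ n, physHermite_add_two n]
    simp only [map_mul, map_add, map_natCast, map_ofNat, map_one, Nat.cast_add]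
    ring

theorem physHermite_succ (n : ℕ) :
    physHermite (n + 1) = C 2 * X * physHermite n - derivative (physHermite n) := by
  cases n with
  | zero => simp [physHermite]
  | succ n => rw [derivative_physHermite_succ, physHermite_add_two]

theorem degree_physHermite : ∀ n : ℕ, (physHermite n).degree = n
  | 0 => by simp [physHermite]
  | 1 => by simp [physHermite]
  | n + 2 => by
    have hlead : (C 2 * X * physHermite (n + 1)).degree = ↑(n + 2) := by
      rw [degree_mul, degree_C_mul_X two_ne_zero, degree_physHermite]; norm_cast; omega
    rw [physHermite_add_two, degree_sub_eq_left_of_degree_lt, hlead]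
    rw [hlead, degree_C_mul (by positivity), degree_physHermite]; norm_cast; omega

theorem natDegree_physHermite (n : ℕ) : (physHermite n).natDegree = n :=
  natDegree_eq_of_degree_eq_some (degree_physHermite n)

theorem leadingCoeff_physHermite : ∀ n : ℕ, (physHermite n).leadingCoeff = 2 ^ n
  | 0 => by simp [physHermite]
  | 1 => by simp [physHermite]
  | n + 2 => by
    rw [physHermite_add_two, leadingCoeff_sub_of_degree_lt, leadingCoeff_mul, leadingCoeff_C_mul_X,
      leadingCoeff_physHermite]
    · ring
    rw [degree_C_mul (by positivity), degree_mul, degree_C_mul_X two_ne_zero, degree_physHermite,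
      degree_physHermite]
    norm_cast; omega

theorem integrable_exp_neg_sq_mul_eval (p : ℝ[X]) :
    Integrable fun t : ℝ => exp (-t ^ 2) * p.eval t := by
  induction p using Polynomial.induction_on' with
  | add p q hp hq => simpa only [eval_add, mul_add] using hp.fun_add hq
  | monomial k a =>
    have h := integrable_rpow_mul_exp_neg_mul_sq one_pos (s := k)
      (by linarith [k.cast_nonneg (α := ℝ)])
    simp only [rpow_natCast, neg_one_mul] at h
    refine (h.const_mul a).congr (.of_forall fun t ↦ ?_)
    simp only [eval_monomial]
    ring

noncomputable def gaussianIntegral : ℝ[X] →ₗ[ℝ] ℝ where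
  toFun p := ∫ t, exp (-t ^ 2) * p.eval t
  map_add' p q := by
    simp only [eval_add, mul_add]
    exact integral_add (integrable_exp_neg_sq_mul_eval p) (integrable_exp_neg_sq_mul_eval q)
  map_smul' c p := by
    simp only [eval_smul, smul_eq_mul, RingHom.id_apply, ← integral_const_mul, mul_left_comm]

theorem gaussianIntegral_apply (p : ℝ[X]) :
    gaussianIntegral p = ∫ t, exp (-t ^ 2) * p.eval t :=
  rfl

theorem gaussianIntegral_C_mul (c : ℝ) (p : ℝ[X]) :
    gaussianIntegral (C c * p) = c * gaussianIntegral p := by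
  rw [← smul_eq_C_mul, map_smul, smul_eq_mul]

theorem gaussianIntegral_C (c : ℝ) : gaussianIntegral (C c) = c * √π := by
  have h := integral_gaussian 1
  simp only [neg_one_mul, div_one] at h
  rw [gaussianIntegral_apply]
  simp only [eval_C, mul_comm _ c, integral_const_mul, h]

theorem gaussianIntegral_derivative_sub_mul_X (p : ℝ[X]) :
    gaussianIntegral (derivative p - C 2 * X * p) = 0 := by
  rw [gaussianIntegral_apply]
  refine integral_eq_zero_of_hasDerivAt_of_integrable (fun t ↦ ?_)
    (integrable_exp_neg_sq_mul_eval _) (integrable_exp_neg_sq_mul_eval p)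
  refine ((hasDerivAt_pow 2 t).fun_neg.exp.fun_mul (p.hasDerivAt t)).congr_deriv ?_
  simp only [eval_sub, eval_mul, eval_C, eval_X]
  ring

theorem gaussianIntegral_physHermite_mul :
    ∀ (n : ℕ) (p : ℝ[X]),
      gaussianIntegral (physHermite n * p) = gaussianIntegral (derivative^[n] p)
  | 0, p => by simp [physHermite]
  | n + 1, p => by
    have hparts : physHermite (n + 1) * p = physHermite n * derivative p -
        (derivative (physHermite n * p) - C 2 * X * (physHermite n * p)) := by
      rw [physHermite_succ, derivative_mul]; ring
    rw [hparts, map_sub, gaussianIntegral_derivative_sub_mul_X, sub_zero,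
      gaussianIntegral_physHermite_mul n, Function.iterate_succ_apply]

theorem gaussianIntegral_physHermite_mul_of_natDegree_lt {n : ℕ} {p : ℝ[X]}
    (hp : p.natDegree < n) : gaussianIntegral (physHermite n * p) = 0 := by
  rw [gaussianIntegral_physHermite_mul, iterate_derivative_eq_zero hp, map_zero]

theorem gaussianIntegral_physHermite_mul_of_natDegree_le {n : ℕ} {p : ℝ[X]}
    (hp : p.natDegree ≤ n) :
    gaussianIntegral (physHermite n * p) = n.factorial * p.coeff n * √π := by
  rw [gaussianIntegral_physHermite_mul, iterate_derivative_eq_C_of_natDegree_le hp,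
    gaussianIntegral_C]

section Nodes

open Lagrange

variable {n : ℕ} {z : Fin n → ℝ}

theorem physHermite_eq_C_mul_nodal (hz : Function.Injective z)
    (hroot : ∀ j, (physHermite n).eval (z j) = 0) :
    physHermite n = C (2 ^ n) * nodal univ z := by
  have hdeg : (C (2 ^ n : ℝ) * nodal univ z).degree = n := by
    rw [degree_C_mul (by positivity), degree_nodal, card_univ, Fintype.card_fin]
  refine eq_of_degree_le_of_eval_index_eq univ hz.injOn ?_ (by rw [hdeg, degree_physHermite]) ?_
    fun j _ ↦ by rw [hroot, eval_mul, eval_nodal_at_node (mem_univ j), mul_zero]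
  · rw [degree_physHermite, card_univ, Fintype.card_fin]
  · rw [leadingCoeff_physHermite, leadingCoeff_mul, leadingCoeff_C, nodal_monic.leadingCoeff,
      mul_one]

theorem gaussianIntegral_nodal_mul (hz : Function.Injective z)
    (hroot : ∀ j, (physHermite n).eval (z j) = 0) {q : ℝ[X]} (hq : q.natDegree < n) :
    gaussianIntegral (nodal univ z * q) = 0 := by
  have h := gaussianIntegral_physHermite_mul_of_natDegree_lt hq
  rw [physHermite_eq_C_mul_nodal hz hroot, mul_assoc, gaussianIntegral_C_mul] at h
  exact (mul_eq_zero.1 h).resolve_left (by positivity)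

theorem gaussianIntegral_eq_sum (hz : Function.Injective z)
    (hroot : ∀ j, (physHermite n).eval (z j) = 0) {f : ℝ[X]} (hf : f.natDegree < 2 * n) :
    gaussianIntegral f = ∑ j, gaussianIntegral (Lagrange.basis univ z j) * f.eval (z j) := by
  refine apply_eq_sum_apply_basis_mul_eval hz.injOn gaussianIntegral (fun q hq ↦ ?_) ?_
  · exact gaussianIntegral_nodal_mul hz hroot (by simpa using hq)
  · simpa using hf

theorem gaussianIntegral_basis {m : ℕ} {z : Fin (m + 1) → ℝ} (hz : Function.Injective z)
    (hroot : ∀ j, (physHermite (m + 1)).eval (z j) = 0) (j : Fin (m + 1)) :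
    gaussianIntegral (Lagrange.basis univ z j) = 2 ^ m * (m + 1).factorial * √π /
      ((m + 1) ^ 2 * ((physHermite m).eval (z j)) ^ 2) := by
  set a := (physHermite m).eval (z j)
  set d := (derivative (nodal univ z)).eval (z j)
  have hdeg : (Lagrange.basis univ z j).natDegree = m := by
    simp [natDegree_basis hz.injOn (mem_univ j)]
  have hquad : gaussianIntegral (physHermite m * Lagrange.basis univ z j) =
      gaussianIntegral (Lagrange.basis univ z j) * a := by
    rw [gaussianIntegral_eq_sum hz hroot, sum_eq_single j]
    · rw [eval_mul, eval_basis_self hz.injOn (mem_univ j), mul_one]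
    · intro i _ hij
      rw [eval_mul, eval_basis_of_ne hij.symm (mem_univ i), mul_zero, mul_zero]
    · simp
    · calc _ ≤ m + m := natDegree_mul_le_of_le (natDegree_physHermite m).le hdeg.le
        _ < 2 * (m + 1) := by omega
  have hpair : gaussianIntegral (physHermite m * Lagrange.basis univ z j) =
      m.factorial * d⁻¹ * √π := by
    have hcoeff : (Lagrange.basis univ z j).coeff m = (Lagrange.basis univ z j).leadingCoeff := by
      rw [leadingCoeff, hdeg]
    rw [gaussianIntegral_physHermite_mul_of_natDegree_le hdeg.le, hcoeff,
      leadingCoeff_basis hz.injOn (mem_univ j), ← prod_inv_distrib, ← nodalWeight,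
      nodalWeight_eq_eval_derivative_nodal (mem_univ j)]
  have hd : 2 * (m + 1) * a = 2 ^ (m + 1) * d := by
    have h := congrArg (fun p ↦ (derivative p).eval (z j)) (physHermite_eq_C_mul_nodal hz hroot)
    simp only [derivative_physHermite_succ, derivative_C_mul, eval_mul, eval_C] at h
    exact h
  -- distinct nodes are simple roots of `nodal`; by `hd`, `H_m` cannot vanish there either
  have hd0 : d ≠ 0 := fun h0 ↦ nodalWeight_ne_zero hz.injOn (mem_univ j)
    (by rw [nodalWeight_eq_eval_derivative_nodal (mem_univ j)]; change d⁻¹ = 0; rw [h0, inv_zero])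
  have ha0 : a ≠ 0 := by
    rintro ha
    rw [ha, mul_zero] at hd
    exact hd0 ((mul_eq_zero.1 hd.symm).resolve_left (by positivity))
  have hweight : gaussianIntegral (Lagrange.basis univ z j) * a * d = m.factorial * √π := by
    rw [← hquad, hpair]; field_simp
  rw [eq_div_iff (by positivity), Nat.factorial_succ]
  push_cast
  linear_combination (gaussianIntegral (Lagrange.basis univ z j) * a * (m + 1) / 2) * hd +
    2 ^ m * (m + 1) * hweight

end Nodes

/-- Gauss–Hermite quadrature: with nodes the `n` distinct real roots of `Hₙ` and weights
`wⱼ = 2^{n−1} n! √π / (n² H_{n−1}(zⱼ)²)`, the quadrature rule is exact for every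
polynomial of degree at most `2n − 1`. -/
theorem gauss_hermite_quadrature {n : ℕ} (hn : 1 ≤ n)
    (z : Fin n → ℝ) (hz_inj : Function.Injective z)
    (hz_root : ∀ j, (physHermite n).eval (z j) = 0)
    (w : Fin n → ℝ)
    (hw : ∀ j, w j = 2 ^ (n - 1) * (n.factorial : ℝ) * Real.sqrt π /
      ((n : ℝ) ^ 2 * ((physHermite (n - 1)).eval (z j)) ^ 2)) :
    ∀ h : Polynomial ℝ, h.natDegree ≤ 2 * n - 1 →
      ∫ t : ℝ, Real.exp (-t ^ 2) * h.eval t = ∑ j, w j * h.eval (z j) := by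
  obtain ⟨m, rfl⟩ := Nat.exists_eq_add_of_le' hn
  intro h hdeg
  rw [← gaussianIntegral_apply, gaussianIntegral_eq_sum hz_inj hz_root (by omega)]
  refine sum_congr rfl fun j _ ↦ ?_
  rw [gaussianIntegral_basis hz_inj hz_root, hw, Nat.add_sub_cancel, Nat.cast_succ]
end
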